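/- Let D be a ℂ-linear triangulated category such that for all objects E,F the space ⊕_i Hom(E,F[i]) is finite-dimensional over ℂ, and which satisfies Serre duality in dimension 2: dim_ℂ Hom(E,F[i]) = dim_ℂ Hom(F,E[2−i]) for all E,F and all i ∈ ℤ. Write χ(E,F) = Σ_i (−1)^i dim_ℂ Hom(E,F[i]). Let σ = (Z,P) be a stability condition on D and let E be a nonzero semistable object of σ with Hom(E,E) ≅ ℂ. Then dim_ℂ Hom(E,E[1]) = 2 − χ(E,E) ≥ 0; in particular χ(E,E) ≤ 2, with equality if and only if E is spherical. -/

import Mathlib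

/-!
STATEMENT 12 (Lemma 5.1 / Mukai): for a stable-like object `E` (a nonzero semistable
object with `Hom(E,E) ≅ ℂ`) in a ℂ-linear, Hom-finite triangulated category satisfying
Serre duality in dimension 2, `dim Hom(E,E[1]) = 2 - χ(E,E) ≥ 0`, so `χ(E,E) ≤ 2` with
equality iff `E` is spherical.
-/

open CategoryTheory CategoryTheory.Limits CategoryTheory.Pretriangulated

universe v u

variable (C : Type u) [Category.{v} C] [HasZeroObject C] [HasShift C ℤ]
  [Preadditive C] [∀ n : ℤ, (CategoryTheory.shiftFunctor C n).Additive] [Pretriangulated C]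
  [CategoryTheory.Linear ℂ C]

/-- A Harder–Narasimhan decomposition of an object `E` with respect to a collection of
full subcategories `P φ` (`φ : ℝ`). -/
structure HNFiltration (P : ℝ → Set C) (E : C) where
  n : ℕ
  phase : Fin n → ℝ
  phase_strictAnti : StrictAnti phase
  obj : Fin (n + 1) → C
  obj_zero : IsZero (obj 0)
  obj_last : obj (Fin.last n) = E
  fac : Fin n → C
  fac_mem : ∀ j, fac j ∈ P (phase j)
  fac_nonzero : ∀ j, ¬ IsZero (fac j)
  triangle : ∀ j : Fin n, ∃ (f : obj j.castSucc ⟶ obj j.succ) (g : obj j.succ ⟶ fac j)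
      (h : fac j ⟶ (obj j.castSucc)⟦(1 : ℤ)⟧), Triangle.mk f g h ∈ distTriang C

/-- A stability condition `σ = (Z, P)` on a triangulated category `C`. -/
structure StabilityCondition where
  Z : C → ℂ
  P : ℝ → Set C
  additive : ∀ T : Triangle C, (T ∈ distTriang C) → Z T.obj₂ = Z T.obj₁ + Z T.obj₃
  P_iso : ∀ (φ : ℝ) (A B : C), (A ≅ B) → A ∈ P φ → B ∈ P φ
  P_zero : ∀ (φ : ℝ) (A : C), IsZero A → A ∈ P φ
  central : ∀ (φ : ℝ) (E : C), E ∈ P φ → ¬ IsZero E →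
      ∃ m : ℝ, 0 < m ∧ Z E = m * Complex.exp (Real.pi * φ * Complex.I)
  shift : ∀ (φ : ℝ) (E : C), E ∈ P (φ + 1) ↔ E⟦(-1 : ℤ)⟧ ∈ P φ
  hom_zero : ∀ (φ₁ φ₂ : ℝ), φ₂ < φ₁ → ∀ (A B : C), A ∈ P φ₁ → B ∈ P φ₂ →
      ∀ f : A ⟶ B, f = 0
  HN : ∀ E : C, ¬ IsZero E → Nonempty (HNFiltration C P E)

/-- `dim_ℂ Hom(E, F[i])`. -/
noncomputable def homDim (E F : C) (i : ℤ) : ℕ := Module.finrank ℂ (E ⟶ F⟦i⟧)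

/-- The Euler form `χ(E,F) = Σ_i (-1)^i dim_ℂ Hom(E, F[i])` (note `(-1)^i = (-1)^|i|`). -/
noncomputable def chi (E F : C) : ℤ :=
  ∑ᶠ i : ℤ, (-1 : ℤ) ^ i.natAbs * (homDim C E F i : ℤ)

/-- An object `E` is spherical if `Hom(E,E[i])` is one-dimensional for `i ∈ {0,2}` and
zero otherwise. -/
def IsSpherical (E : C) : Prop :=
  homDim C E E 0 = 1 ∧ homDim C E E 2 = 1 ∧
    ∀ i : ℤ, i ≠ 0 → i ≠ 2 → ∀ f : E ⟶ E⟦i⟧, f = 0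

/-!
For `i < 0` we have `Hom(E, E[i]) = 0` because `E[i]` is semistable of the smaller phase `φ + i`.
Serre duality turns this into vanishing for `i > 2` and gives
`dim Hom(E, E[2]) = dim Hom(E, E) = 1`. Hence `χ(E, E) = 2 - dim Hom(E, E[1])`, and `E` is
spherical exactly when `Hom(E, E[1]) = 0`.
-/

namespace StabilityCondition

omit [Linear ℂ C]

variable {C} (σ : StabilityCondition C)

lemma mem_P_iff_of_iso {φ : ℝ} {A B : C} (e : A ≅ B) : A ∈ σ.P φ ↔ B ∈ σ.P φ :=
  ⟨σ.P_iso φ A B e, σ.P_iso φ B A e.symm⟩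

lemma shift_add_one_mem_P_add_one_iff (A : C) (n : ℤ) (φ : ℝ) :
    A⟦n + 1⟧ ∈ σ.P (φ + 1) ↔ A⟦n⟧ ∈ σ.P φ := by
  rw [σ.shift]
  exact σ.mem_P_iff_of_iso ((shiftFunctorAdd' C (n + 1) (-1) n (by ring)).app A).symm

lemma shift_mem_P {A : C} {φ : ℝ} (hA : A ∈ σ.P φ) (n : ℤ) : A⟦n⟧ ∈ σ.P (φ + n) := by
  induction n using Int.induction_on with
  | zero => simpa using (σ.mem_P_iff_of_iso ((shiftFunctorZero C ℤ).app A).symm).1 hA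
  | succ n ih =>
    have h := (σ.shift_add_one_mem_P_add_one_iff A n (φ + n)).2 ih
    push_cast
    rwa [← add_assoc]
  | pred n ih =>
    have h := σ.shift_add_one_mem_P_add_one_iff A (-n - 1) (φ + (-n - 1 : ℤ))
    rw [sub_add_cancel] at h
    refine h.1 ?_
    convert ih using 2
    push_cast
    ring

lemma hom_shift_eq_zero {A B : C} {φ ψ : ℝ} (hA : A ∈ σ.P φ) (hB : B ∈ σ.P ψ) {i : ℤ}
    (hi : ψ + i < φ) (f : A ⟶ B⟦i⟧) : f = 0 :=
  σ.hom_zero φ (ψ + i) hi A (B⟦i⟧) hA (σ.shift_mem_P hB i) f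

end StabilityCondition

section

omit [HasZeroObject C] [∀ n : ℤ, (shiftFunctor C n).Additive] [Pretriangulated C]

lemma homDim_eq_zero_iff {E F : C} {i : ℤ} [FiniteDimensional ℂ (E ⟶ F⟦i⟧)] :
    homDim C E F i = 0 ↔ ∀ f : E ⟶ F⟦i⟧, f = 0 :=
  Module.finrank_zero_iff.trans (subsingleton_iff_forall_eq 0)

lemma homDim_zero (E F : C) : homDim C E F 0 = Module.finrank ℂ (E ⟶ F) :=
  (Linear.homCongr ℂ (Iso.refl E) ((shiftFunctorZero C ℤ).app F)).finrank_eq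

lemma chi_eq_of_homDim_eq_zero {E F : C} (h : ∀ i, i < 0 ∨ 2 < i → homDim C E F i = 0) :
    chi C E F = homDim C E F 0 - homDim C E F 1 + homDim C E F 2 := by
  have hsupp : Function.support (fun i : ℤ => (-1 : ℤ) ^ i.natAbs * (homDim C E F i : ℤ)) ⊆
      (({0, 1, 2} : Finset ℤ) : Set ℤ) := by
    intro i hi
    by_contra hi'
    simp only [Finset.coe_insert, Finset.coe_singleton, Set.mem_insert_iff,
      Set.mem_singleton_iff, not_or] at hi'
    exact hi (by simp [h i (by omega)])
  rw [chi, finsum_eq_sum_of_support_subset _ hsupp, Finset.sum_insert (by decide),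
    Finset.sum_insert (by decide), Finset.sum_singleton]
  norm_num
  ring

lemma isSpherical_iff_homDim {E : C} [∀ i : ℤ, FiniteDimensional ℂ (E ⟶ E⟦i⟧)] :
    IsSpherical C E ↔ homDim C E E 0 = 1 ∧ homDim C E E 2 = 1 ∧
      ∀ i : ℤ, i ≠ 0 → i ≠ 2 → homDim C E E i = 0 := by
  simp only [IsSpherical, homDim_eq_zero_iff]

end

theorem ext_one_of_stable
    -- `C` is Hom-finite: each `Hom(E,F[i])` is finite dimensional and only finitely
    -- many of them are nonzero:
    (hfin : ∀ E F : C, (∀ i : ℤ, FiniteDimensional ℂ (E ⟶ F⟦i⟧)) ∧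
      Set.Finite {i : ℤ | ∃ f : E ⟶ F⟦i⟧, f ≠ 0})
    -- Serre duality in dimension 2:
    (hserre : ∀ (E F : C) (i : ℤ), homDim C E F i = homDim C F E (2 - i))
    (σ : StabilityCondition C) (E : C)
    (hsemi : ∃ φ : ℝ, E ∈ σ.P φ)
    (hhom : Module.finrank ℂ (E ⟶ E) = 1) :
    (homDim C E E 1 : ℤ) = 2 - chi C E E ∧ chi C E E ≤ 2 ∧
      (chi C E E = 2 ↔ IsSpherical C E) := by
  obtain ⟨φ, hφ⟩ := hsemi
  have := (hfin E E).1
  have hneg : ∀ i : ℤ, i < 0 → homDim C E E i = 0 := fun i hi =>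
    (homDim_eq_zero_iff C).2 <| σ.hom_shift_eq_zero hφ hφ <| by
      linarith [(Int.cast_lt_zero (R := ℝ)).2 hi]
  have hvanish : ∀ i : ℤ, i < 0 ∨ 2 < i → homDim C E E i = 0 := by
    rintro i (hi | hi)
    · exact hneg i hi
    · rw [hserre]
      exact hneg _ (by omega)
  have h0 : homDim C E E 0 = 1 := (homDim_zero C E E).trans hhom
  have h2 : homDim C E E 2 = 1 := by rw [hserre]; exact h0
  have hchi : chi C E E = 2 - homDim C E E 1 := by
    rw [chi_eq_of_homDim_eq_zero C hvanish, h0, h2]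
    ring
  have hsph : IsSpherical C E ↔ homDim C E E 1 = 0 := by
    rw [isSpherical_iff_homDim C]
    refine ⟨fun h => h.2.2 1 one_ne_zero (by norm_num), fun h1 => ⟨h0, h2, fun i hi0 hi2 => ?_⟩⟩
    obtain rfl | hi1 := eq_or_ne i 1
    · exact h1
    · exact hvanish i (by omega)
  rw [hsph]
  omega
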